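/- Let G₀ = {z : |z-a| < ε} ⊂ G with 0 < ε < 1. For every z ∈ G, (1/π)∬_{G₀} dA(ζ)/(|ζ-a||ζ-z|) ≤ 8 ln(1/|z-a|) + C for some constant C depending only on ε (for |z-a| sufficiently small). Consequently if V^ is measurable with |V^(z)| ≤ μ/|z-a| on G, then ω(z) = (T_G V^)(z) satisfies |ω(z)| ≤ μ(M + 8 ln(1/|z-a|)), and hence M'|z-a|^{8μ} ≤ |exp(ω(z))| ≤ M'/|z-a|^{8μ} for z ∈ G near a, for suitable constants M, M' > 0. -/

import Mathlib

/-!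
Write `r = ‖z - a‖`, `x = ‖ζ - a‖`, `y = ‖ζ - z‖`. Since `x + y ≥ r`, the smaller of `x, y`, say `x`,
satisfies `x * max x (r / 2) ≤ x * y`; hence `1 / (x y) ≤ g x + g y` for
`g ρ = 1 / (ρ * max ρ (r / 2))` on `(0, R)`, whenever `x < R`. In polar coordinates
`∫ g ‖ζ - c‖ = 2π (1 + log (2R / r))`, so the kernel integral over any set in `ball a R` is at most
`4π (1 + log (2R / r))`; as `G` lies in some ball around `a`, this bounds `ω` too. The coefficient
`4` of `log (1 / r)` leaves the slack that absorbs the additive constant in the two-sided bound for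
`‖exp ω‖`.
-/

open MeasureTheory Real Set

noncomputable def kernelMajorant (s R ρ : ℝ) : ℝ :=
  (Ioo 0 R).indicator (fun ρ => (ρ * max ρ s)⁻¹) ρ

lemma kernelMajorant_nonneg (s R ρ : ℝ) : 0 ≤ kernelMajorant s R ρ :=
  indicator_nonneg
    (fun _ hρ => inv_nonneg.2 (mul_nonneg hρ.1.le (hρ.1.le.trans (le_max_left _ _)))) ρ

lemma inv_mul_le_kernelMajorant {s R x y : ℝ} (hx : 0 < x) (hxy : x ≤ y) (hxR : x < R)
    (hs : 2 * s ≤ x + y) : (x * y)⁻¹ ≤ kernelMajorant s R x := by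
  rw [kernelMajorant, indicator_of_mem (show x ∈ Ioo 0 R from ⟨hx, hxR⟩)]
  exact inv_anti₀ (mul_pos hx (hx.trans_le (le_max_left x s)))
    (mul_le_mul_of_nonneg_left (max_le hxy (by linarith)) hx.le)

lemma inv_mul_le_kernelMajorant_add {s R x y : ℝ} (hx : 0 ≤ x) (hy : 0 ≤ y) (hxR : x < R)
    (hs : 2 * s ≤ x + y) : (x * y)⁻¹ ≤ kernelMajorant s R x + kernelMajorant s R y := by
  have hx' := kernelMajorant_nonneg s R x
  have hy' := kernelMajorant_nonneg s R y
  rcases hx.eq_or_lt with rfl | hx0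
  · simp only [zero_mul, inv_zero]; positivity
  rcases hy.eq_or_lt with rfl | hy0
  · simp only [mul_zero, inv_zero]; positivity
  rcases le_total x y with hxy | hyx
  · linarith [inv_mul_le_kernelMajorant hx0 hxy hxR hs]
  · have h := inv_mul_le_kernelMajorant hy0 hyx (hyx.trans_lt hxR) (by linarith : 2 * s ≤ y + x)
    linarith [mul_comm x y ▸ h]

lemma mul_kernelMajorant (s R : ℝ) :
    (fun ρ => ρ * kernelMajorant s R ρ) = (Ioo 0 R).indicator (fun ρ => (max ρ s)⁻¹) := by
  ext ρ
  by_cases hρ : ρ ∈ Ioo 0 R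
  · rw [kernelMajorant, indicator_of_mem hρ, indicator_of_mem hρ, mul_inv, ← mul_assoc,
      mul_inv_cancel₀ hρ.1.ne', one_mul]
  · simp [kernelMajorant, indicator_of_notMem hρ]

lemma continuous_inv_max {s : ℝ} (hs : 0 < s) : Continuous fun ρ : ℝ => (max ρ s)⁻¹ :=
  (continuous_id.max continuous_const).inv₀ fun ρ => (hs.trans_le (le_max_right ρ s)).ne'

lemma intervalIntegral_inv_max {s R : ℝ} (hs : 0 < s) (hsR : s ≤ R) :
    ∫ ρ in 0..R, (max ρ s)⁻¹ = 1 + log (R / s) := by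
  have hint := fun a b => (continuous_inv_max hs).intervalIntegrable (μ := volume) a b
  rw [← intervalIntegral.integral_add_adjacent_intervals (hint 0 s) (hint s R)]
  have hlow : ∫ ρ in 0..s, (max ρ s)⁻¹ = ∫ ρ in 0..s, s⁻¹ :=
    intervalIntegral.integral_congr fun ρ hρ => by
      rw [uIcc_of_le hs.le] at hρ; rw [max_eq_right hρ.2]
  have hhigh : ∫ ρ in s..R, (max ρ s)⁻¹ = ∫ ρ in s..R, ρ⁻¹ :=
    intervalIntegral.integral_congr fun ρ hρ => by
      rw [uIcc_of_le hsR] at hρ; rw [max_eq_left hρ.1]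
  rw [hlow, hhigh, intervalIntegral.integral_const, integral_inv_of_pos hs (hs.trans_le hsR),
    smul_eq_mul, sub_zero, mul_inv_cancel₀ hs.ne']

lemma integral_Ioi_mul_kernelMajorant {s R : ℝ} (hs : 0 < s) (hsR : s ≤ R) :
    ∫ ρ in Ioi 0, ρ * kernelMajorant s R ρ = 1 + log (R / s) := by
  rw [mul_kernelMajorant, setIntegral_indicator measurableSet_Ioo,
    inter_eq_self_of_subset_right Ioo_subset_Ioi_self, integral_Ioc_eq_integral_Ioo.symm,
    ← intervalIntegral.integral_of_le (hs.le.trans hsR), intervalIntegral_inv_max hs hsR]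

lemma integrable_kernelMajorant_norm_sub {s R : ℝ} (hs : 0 < s) (c : ℂ) :
    Integrable fun ζ : ℂ => kernelMajorant s R ‖ζ - c‖ := by
  refine Integrable.comp_sub_right (f := fun ζ : ℂ => kernelMajorant s R ‖ζ‖) ?_ c
  rw [integrable_fun_norm_addHaar volume]
  simp only [Complex.finrank_real_complex, Nat.reduceSub, pow_one, smul_eq_mul, mul_kernelMajorant]
  exact ((integrable_indicator_iff measurableSet_Ioo).2
    ((continuous_inv_max hs).integrableOn_Icc.mono_set Ioo_subset_Icc_self)).integrableOn

lemma integral_kernelMajorant_norm_sub {s R : ℝ} (hs : 0 < s) (hsR : s ≤ R) (c : ℂ) :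
    ∫ ζ : ℂ, kernelMajorant s R ‖ζ - c‖ = 2 * π * (1 + log (R / s)) := by
  rw [integral_sub_right_eq_self (fun ζ : ℂ => kernelMajorant s R ‖ζ‖) c,
    integral_fun_norm_addHaar volume]
  simp only [Complex.finrank_real_complex, Nat.reduceSub, pow_one, smul_eq_mul,
    integral_Ioi_mul_kernelMajorant hs hsR, Measure.real, Complex.volume_ball, ENNReal.ofReal_one,
    one_pow, one_mul, ENNReal.coe_toReal, NNReal.coe_real_pi, nsmul_eq_mul, Nat.cast_ofNat, mul_assoc]

lemma log_div_eq_log_add_log_one_div {t ρ : ℝ} (ht : t ≠ 0) (hρ : ρ ≠ 0) :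
    log (t / ρ) = log t + log (1 / ρ) := by
  rw [log_div ht hρ, one_div, log_inv, sub_eq_add_neg]

lemma setIntegral_le_of_le_mul_inv_norm_mul_norm {S : Set ℂ} (hS : MeasurableSet S) {a z : ℂ}
    {R c : ℝ} (hSR : S ⊆ Metric.ball a R) (hz : 0 < ‖z - a‖) (hzR : ‖z - a‖ ≤ 2 * R)
    (hc : 0 ≤ c) {f : ℂ → ℝ} (hf₀ : ∀ᵐ ζ ∂volume.restrict S, 0 ≤ f ζ)
    (hf : ∀ᵐ ζ ∂volume.restrict S, f ζ ≤ c * (‖ζ - a‖ * ‖ζ - z‖)⁻¹) :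
    ∫ ζ in S, f ζ ≤ c * (4 * π * (1 + log (2 * R) + log (1 / ‖z - a‖))) := by
  set g := kernelMajorant (‖z - a‖ / 2) R
  have hs : 0 < ‖z - a‖ / 2 := half_pos hz
  have hD : Integrable fun ζ => c * (g ‖ζ - a‖ + g ‖ζ - z‖) :=
    ((integrable_kernelMajorant_norm_sub hs a).add
      (integrable_kernelMajorant_norm_sub hs z)).const_mul c
  have hle : ∀ ζ ∈ S, (‖ζ - a‖ * ‖ζ - z‖)⁻¹ ≤ g ‖ζ - a‖ + g ‖ζ - z‖ := by
    intro ζ hζ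
    refine inv_mul_le_kernelMajorant_add (norm_nonneg _) (norm_nonneg _) ?_ ?_
    · exact mem_ball_iff_norm.1 (hSR hζ)
    · linarith [norm_sub_le_norm_sub_add_norm_sub z ζ a, norm_sub_rev z ζ]
  calc ∫ ζ in S, f ζ ≤ ∫ ζ in S, c * (g ‖ζ - a‖ + g ‖ζ - z‖) := by
        refine integral_mono_of_nonneg hf₀ hD.integrableOn ?_
        filter_upwards [hf, ae_restrict_mem hS] with ζ hfζ hζ
        exact hfζ.trans (mul_le_mul_of_nonneg_left (hle ζ hζ) hc)
    _ ≤ ∫ ζ, c * (g ‖ζ - a‖ + g ‖ζ - z‖) :=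
        setIntegral_le_integral hD (.of_forall fun ζ =>
          mul_nonneg hc (add_nonneg (kernelMajorant_nonneg ..) (kernelMajorant_nonneg ..)))
    _ = c * (4 * π * (1 + log (2 * R) + log (1 / ‖z - a‖))) := by
        have hsR : ‖z - a‖ / 2 ≤ R := by linarith
        rw [integral_const_mul, integral_add (integrable_kernelMajorant_norm_sub hs a)
          (integrable_kernelMajorant_norm_sub hs z), integral_kernelMajorant_norm_sub hs hsR,
          integral_kernelMajorant_norm_sub hs hsR, div_div_eq_mul_div, mul_comm R 2,
          log_div_eq_log_add_log_one_div (by linarith) hz.ne']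
        ring

noncomputable def cauchyTransform (G : Set ℂ) (f : ℂ → ℂ) (z : ℂ) : ℂ :=
  -(1 / (π : ℂ)) * ∫ ζ in G, f ζ / (ζ - z)

lemma norm_cauchyTransform_le {G : Set ℂ} (hG : MeasurableSet G) {a z : ℂ} {R μ : ℝ}
    (hGR : G ⊆ Metric.ball a R) (hz : 0 < ‖z - a‖) (hzR : ‖z - a‖ ≤ 2 * R) (hμ : 0 ≤ μ)
    {f : ℂ → ℂ} (hf : ∀ ζ ∈ G, ζ ≠ a → ‖f ζ‖ ≤ μ / ‖ζ - a‖) :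
    ‖cauchyTransform G f z‖ ≤ μ * (4 * (1 + log (2 * R)) + 4 * log (1 / ‖z - a‖)) := by
  have hbound : ∀ᵐ ζ ∂volume.restrict G, ‖f ζ / (ζ - z)‖ ≤ μ * (‖ζ - a‖ * ‖ζ - z‖)⁻¹ := by
    filter_upwards [ae_restrict_mem hG, Measure.ae_ne _ a] with ζ hζ hζa
    rw [norm_div, mul_inv, ← mul_assoc, ← div_eq_mul_inv, ← div_eq_mul_inv]
    gcongr
    exact hf ζ hζ hζa
  have hkernel := setIntegral_le_of_le_mul_inv_norm_mul_norm hG hGR hz hzR hμ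
    (.of_forall fun ζ => norm_nonneg (f ζ / (ζ - z))) hbound
  calc ‖cauchyTransform G f z‖ = π⁻¹ * ‖∫ ζ in G, f ζ / (ζ - z)‖ := by
        simp [cauchyTransform, abs_of_pos pi_pos]
    _ ≤ π⁻¹ * (μ * (4 * π * (1 + log (2 * R) + log (1 / ‖z - a‖)))) := by
        gcongr
        exact (norm_integral_le_integral_norm _).trans hkernel
    _ = μ * (4 * (1 + log (2 * R)) + 4 * log (1 / ‖z - a‖)) := by
        field_simp

lemma norm_exp_mem_Icc_of_norm_le_mul_log {w : ℂ} {t p : ℝ} (ht : 0 < t)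
    (hw : ‖w‖ ≤ p * log (1 / t)) : ‖Complex.exp w‖ ∈ Icc (t ^ p) (1 / t ^ p) := by
  have hre := abs_le.1 ((Complex.abs_re_le_norm w).trans hw)
  rw [one_div, log_inv] at hre
  rw [Complex.norm_exp, rpow_def_of_pos ht, one_div, ← exp_neg]
  exact ⟨exp_le_exp.2 (by linarith), exp_le_exp.2 (by linarith)⟩

lemma integral_ball_one_div_norm_mul_norm_le {a z : ℂ} {ε : ℝ} (hz : 0 < ‖z - a‖)
    (hzε : ‖z - a‖ ≤ 2 * ε) :
    (1 / π) * ∫ ζ in Metric.ball a ε, 1 / (‖ζ - a‖ * ‖ζ - z‖) ≤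
      4 * (1 + log (2 * ε)) + 4 * log (1 / ‖z - a‖) := by
  have h := setIntegral_le_of_le_mul_inv_norm_mul_norm measurableSet_ball subset_rfl hz hzε
    zero_le_one (f := fun ζ => 1 / (‖ζ - a‖ * ‖ζ - z‖)) (.of_forall fun _ => by positivity)
    (.of_forall fun _ => by rw [one_mul, one_div])
  calc (1 / π) * ∫ ζ in Metric.ball a ε, 1 / (‖ζ - a‖ * ‖ζ - z‖)
      ≤ (1 / π) * (1 * (4 * π * (1 + log (2 * ε) + log (1 / ‖z - a‖)))) := by gcongr
    _ = 4 * (1 + log (2 * ε)) + 4 * log (1 / ‖z - a‖) := by field_simp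

theorem growth_estimate_general
    (G : Set ℂ) (hGo : IsOpen G) (hGb : Bornology.IsBounded G)
    (a : ℂ) (ε : ℝ) (hε0 : 0 < ε) (hε1 : ε < 1)
    (μ : ℝ) (hμ : 0 < μ)
    (Vh : ℂ → ℂ)
    (hVb : ∀ z ∈ G, z ≠ a → ‖Vh z‖ ≤ μ / ‖z - a‖)
    (ω : ℂ → ℂ)
    (hω : ∀ z, ω z = -(1 / (π : ℂ)) * ∫ ζ in G, Vh ζ / (ζ - z)) :
    (∃ C : ℝ, ∃ δ > 0, ∀ z ∈ G, 0 < ‖z - a‖ → ‖z - a‖ < δ →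
      (1 / π) * (∫ ζ in Metric.ball a ε, 1 / (‖ζ - a‖ * ‖ζ - z‖)) ≤
        8 * Real.log (1 / ‖z - a‖) + C) ∧
    (∃ M : ℝ, ∃ δ > 0, ∀ z ∈ G, 0 < ‖z - a‖ → ‖z - a‖ < δ →
      ‖ω z‖ ≤ μ * (M + 8 * Real.log (1 / ‖z - a‖))) ∧
    (∃ M' > (0 : ℝ), ∃ δ > 0, ∀ z ∈ G, 0 < ‖z - a‖ → ‖z - a‖ < δ →
      M' * ‖z - a‖ ^ (8 * μ) ≤ ‖Complex.exp (ω z)‖ ∧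
      ‖Complex.exp (ω z)‖ ≤ M' / ‖z - a‖ ^ (8 * μ)) := by
  obtain ⟨R, hGR⟩ := hGb.subset_ball a
  set M := 4 * (1 + log (2 * R))
  have hωle : ∀ z ∈ G, 0 < ‖z - a‖ → ‖ω z‖ ≤ μ * (M + 4 * log (1 / ‖z - a‖)) := by
    intro z hz hr
    have hzR : ‖z - a‖ < R := mem_ball_iff_norm.1 (hGR hz)
    rw [hω z]
    exact norm_cauchyTransform_le hGo.measurableSet hGR hr (by linarith) hμ.le hVb
  refine ⟨⟨4 * (1 + log (2 * ε)), ε, hε0, fun z _ hr hrε => ?_⟩,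
    ⟨M, 1, one_pos, fun z hz hr hr1 => ?_⟩, ⟨1, one_pos, exp (-(M / 4)), exp_pos _,
      fun z hz hr hrδ => ?_⟩⟩
  · have h := integral_ball_one_div_norm_mul_norm_le (ε := ε) hr (by linarith)
    have hL := log_nonneg (one_le_one_div hr (hrε.trans hε1).le)
    linarith
  · have hL := log_nonneg (one_le_one_div hr hr1.le)
    exact (hωle z hz hr).trans (by gcongr; linarith)
  · have hML : M ≤ 4 * log (1 / ‖z - a‖) := by
      rw [one_div, log_inv]
      linarith [(log_lt_iff_lt_exp hr).2 hrδ]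
    have h : ‖ω z‖ ≤ 8 * μ * log (1 / ‖z - a‖) := by
      calc ‖ω z‖ ≤ μ * (M + 4 * log (1 / ‖z - a‖)) := hωle z hz hr
        _ ≤ μ * (8 * log (1 / ‖z - a‖)) := by gcongr; linarith
        _ = 8 * μ * log (1 / ‖z - a‖) := by ring
    obtain ⟨hlow, hupp⟩ := norm_exp_mem_Icc_of_norm_le_mul_log hr h
    exact ⟨by rwa [one_mul], hupp⟩

/-- Key growth estimate: with `G₀ = {|z-a| < ε} ⊆ G`, `0 < ε < 1`, one has
`(1/π)∬_{G₀} dA(ζ)/(|ζ-a||ζ-z|) ≤ 8 ln(1/|z-a|) + C` for `z ∈ G` with `|z-a|` small;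
consequently, if `|V^(z)| ≤ μ/|z-a|` on `G` then `ω = T_G V^` satisfies
`|ω(z)| ≤ μ(M + 8 ln(1/|z-a|))` and `M'|z-a|^{8μ} ≤ |exp(ω(z))| ≤ M'/|z-a|^{8μ}`
near `a`, for suitable constants `M, M' > 0`. -/
theorem growth_estimate
    (G : Set ℂ) (hGo : IsOpen G) (hGb : Bornology.IsBounded G)
    (a : ℂ) (ha : a ∈ G) (ε : ℝ) (hε0 : 0 < ε) (hε1 : ε < 1)
    (hG₀ : Metric.ball a ε ⊆ G) (μ : ℝ) (hμ : 0 < μ)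
    (Vh : ℂ → ℂ) (hVm : Measurable Vh)
    (hVb : ∀ z ∈ G, z ≠ a → ‖Vh z‖ ≤ μ / ‖z - a‖)
    (hVint : ∀ z ∈ G, Integrable (fun ζ => Vh ζ / (ζ - z)) (volume.restrict G))
    (ω : ℂ → ℂ)
    (hω : ∀ z, ω z = -(1 / (π : ℂ)) * ∫ ζ in G, Vh ζ / (ζ - z)) :
    (∃ C : ℝ, ∃ δ > 0, ∀ z ∈ G, 0 < ‖z - a‖ → ‖z - a‖ < δ →
      (1 / π) * (∫ ζ in Metric.ball a ε, 1 / (‖ζ - a‖ * ‖ζ - z‖)) ≤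
        8 * Real.log (1 / ‖z - a‖) + C) ∧
    (∃ M : ℝ, ∃ δ > 0, ∀ z ∈ G, 0 < ‖z - a‖ → ‖z - a‖ < δ →
      ‖ω z‖ ≤ μ * (M + 8 * Real.log (1 / ‖z - a‖))) ∧
    (∃ M' > (0 : ℝ), ∃ δ > 0, ∀ z ∈ G, 0 < ‖z - a‖ → ‖z - a‖ < δ →
      M' * ‖z - a‖ ^ (8 * μ) ≤ ‖Complex.exp (ω z)‖ ∧
      ‖Complex.exp (ω z)‖ ≤ M' / ‖z - a‖ ^ (8 * μ)) :=
  growth_estimate_general G hGo hGb a ε hε0 hε1 μ hμ Vh hVb ω hω
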